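/- Let α, η be symmetric N×N real matrices and θ skew-symmetric. Define for each k: L_k = α_{kk} - ∑_{m≠k} α_{km} and B_k = η_{kk} - ∑_{m≠k} η_{km}, and for m < k: L_{km} = α_{km}, B_{km} = η_{km}, G_{km} = θ_{km}. Then the original Lagrangian L = (1/2)Q̇ᵀαQ̇ + Q̇ᵀθQ - (1/2)QᵀηQ equals ∑_k [(L_k/2)Q̇_k² - (B_k/2)Q_k²] + ∑_{m<k} [(L_{km}/2)(Q̇_k+Q̇_m)² - (B_{km}/2)(Q_k+Q_m)² + G_{km}(Q_m Q̇_k - Q_k Q̇_m)] for all differentiable Q : ℝ → ℝ^N. -/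
import Mathlib
open Finset Matrix

lemma swap_lt {N : ℕ} (f : Fin N → Fin N → ℝ) :
    ∑ k, ∑ m ∈ Finset.univ.filter (fun m => k < m), f k m
      = ∑ k, ∑ m ∈ Finset.univ.filter (fun m => m < k), f m k := by
  rw [Finset.sum_sigma', Finset.sum_sigma']
  apply Finset.sum_nbij' (fun p => ⟨p.2, p.1⟩) (fun p => ⟨p.2, p.1⟩) <;>
    simp [Finset.mem_sigma]

lemma ne_split {N : ℕ} (f : Fin N → Fin N → ℝ) :
    ∑ k, ∑ m ∈ Finset.univ.erase k, f k m
      = ∑ k, ∑ m ∈ Finset.univ.filter (fun m => m < k), (f k m + f m k) := by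
  have h1 : ∀ k : Fin N, ∑ m ∈ Finset.univ.erase k, f k m
      = ∑ m ∈ Finset.univ.filter (fun m => m < k), f k m
        + ∑ m ∈ Finset.univ.filter (fun m => k < m), f k m := by
    intro k
    rw [← Finset.sum_filter_add_sum_filter_not (Finset.univ.erase k) (fun m => m < k)]
    congr 1
    · congr 1
      ext m
      simp only [Finset.mem_filter, Finset.mem_erase, Finset.mem_univ, true_and, and_true]
      constructor
      · rintro ⟨_, h⟩; exact h
      · intro h; exact ⟨h.ne, h⟩
    · congr 1
      ext m
      simp only [Finset.mem_filter, Finset.mem_erase, Finset.mem_univ, true_and, and_true]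
      constructor
      · rintro ⟨hne, h⟩; exact lt_of_le_of_ne (not_lt.mp h) (Ne.symm hne)
      · intro h; exact ⟨h.ne', not_lt.mpr h.le⟩
  simp_rw [h1, Finset.sum_add_distrib, swap_lt]

lemma key_split {N : ℕ} (f : Fin N → Fin N → ℝ) :
    ∑ k, ∑ m, f k m
      = ∑ k, f k k + ∑ k, ∑ m ∈ Finset.univ.filter (fun m => m < k), (f k m + f m k) := by
  rw [← ne_split, ← Finset.sum_add_distrib]
  congr 1
  ext k
  rw [Finset.add_sum_erase _ _ (Finset.mem_univ k)]

theorem canonical_GLC_lagrangian_decomposition (N : ℕ)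
    (α θ η : Matrix (Fin N) (Fin N) ℝ)
    (hα : ∀ k m, α k m = α m k) (hθ : ∀ k m, θ k m = -θ m k)
    (hη : ∀ k m, η k m = η m k)
    (L B : Fin N → ℝ) (Lc Bc Gc : Fin N → Fin N → ℝ)
    (hL : ∀ k, L k = α k k - ∑ m ∈ Finset.univ.erase k, α k m)
    (hB : ∀ k, B k = η k k - ∑ m ∈ Finset.univ.erase k, η k m)
    (hLc : ∀ m k, m < k → Lc k m = α k m)
    (hBc : ∀ m k, m < k → Bc k m = η k m)
    (hGc : ∀ m k, m < k → Gc k m = θ k m)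
    (Q Q' : ℝ → Fin N → ℝ)
    (hQ : ∀ t, HasDerivAt Q (Q' t) t) :
    ∀ t : ℝ,
      (1 / 2) * (Q' t ⬝ᵥ α.mulVec (Q' t)) + Q' t ⬝ᵥ θ.mulVec (Q t)
          - (1 / 2) * (Q t ⬝ᵥ η.mulVec (Q t)) =
        (∑ k, ((L k / 2) * Q' t k ^ 2 - (B k / 2) * Q t k ^ 2))
          + ∑ k, ∑ m ∈ Finset.univ.filter (fun m => m < k),
              ((Lc k m / 2) * (Q' t k + Q' t m) ^ 2
                - (Bc k m / 2) * (Q t k + Q t m) ^ 2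
                + Gc k m * (Q t m * Q' t k - Q t k * Q' t m)) := by
  intro t
  set v := Q' t with hv
  set q := Q t with hq
  have hθ0 : ∀ k, θ k k = 0 := fun k => by have := hθ k k; linarith
  have hLHS : (1/2) * (v ⬝ᵥ α.mulVec v) + v ⬝ᵥ θ.mulVec q - (1/2) * (q ⬝ᵥ η.mulVec q)
      = ∑ k, ∑ m, ((1/2) * (v k * (α k m * v m)) + v k * (θ k m * q m)
          - (1/2) * (q k * (η k m * q m))) := by
    simp only [dotProduct, mulVec, Finset.mul_sum, ← Finset.sum_add_distrib,
      ← Finset.sum_sub_distrib]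
  rw [hLHS, key_split]
  simp_rw [hL, hB]
  have hrhs1 : ∑ k, ((α k k - ∑ m ∈ Finset.univ.erase k, α k m) / 2 * v k ^ 2
        - (η k k - ∑ m ∈ Finset.univ.erase k, η k m) / 2 * q k ^ 2)
      = ∑ k, (α k k / 2 * v k ^ 2 - η k k / 2 * q k ^ 2)
        - ∑ k, ∑ m ∈ Finset.univ.erase k,
            (α k m / 2 * v k ^ 2 - η k m / 2 * q k ^ 2) := by
    rw [← Finset.sum_sub_distrib]
    apply Finset.sum_congr rfl
    intro k _
    rw [Finset.sum_sub_distrib, ← Finset.sum_mul, ← Finset.sum_mul, ← Finset.sum_div,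
      ← Finset.sum_div]
    ring
  rw [hrhs1, ne_split (fun k m => α k m / 2 * v k ^ 2 - η k m / 2 * q k ^ 2)]
  rw [sub_add_eq_add_sub, add_sub_assoc, ← Finset.sum_sub_distrib]
  simp_rw [← Finset.sum_sub_distrib]
  congr 1
  · apply Finset.sum_congr rfl
    intro k _
    rw [hθ0]
    ring
  · apply Finset.sum_congr rfl
    intro k _
    apply Finset.sum_congr rfl
    intro m hm
    rw [Finset.mem_filter] at hm
    rw [hLc m k hm.2, hBc m k hm.2, hGc m k hm.2, hα m k, hη m k, hθ m k]
    ring
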